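/- arXiv:1802.08724 — 2 statements merged into one kernel-verified Lean document; each statement's English description precedes it below -/
import Mathlib

section
/- Let V be a real Hilbert space, φ_1, …, φ_n ∈ V, w_1, …, w_n ≥ 0, and let c : V → V be defined by c(v) = Σ_{i=1}^n w_i ⟨v, φ_i⟩ φ_i. Let ξ_1, …, ξ_r be an orthonormal system of eigenvectors of c spanning the range of c, with eigenvalues λ_1 ≥ λ_2 ≥ … ≥ λ_r > 0, and set λ_k = 0 for k > r. Then for every N ≤ r, the subspace V_N = span{ξ_1, …, ξ_N} satisfies Σ_{i=1}^n w_i ‖φ_i − P_{V_N}(φ_i)‖² = Σ_{k=N+1}^{r} λ_k, where P_{V_N} is the orthogonal projection onto V_N. -/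
open scoped RealInnerProductSpace

/-- POD error identity: if `ξ_0, …, ξ_{r-1}` is an orthonormal system of eigenvectors
of the weighted correlation operator `c`, spanning the range of `c`, with eigenvalues
`λ_0 ≥ … ≥ λ_{r-1} > 0` (and `λ_k = 0` for `k ≥ r`), then for every `N ≤ r` the
orthogonal projection `P` onto `V_N = span{ξ_0, …, ξ_{N-1}}` satisfies
`Σᵢ wᵢ ‖φᵢ − P(φᵢ)‖² = Σ_{k=N}^{r-1} λ_k`. -/
theorem weighted_POD_error_eq_tail_eigenvalues
    {V : Type*} [NormedAddCommGroup V] [InnerProductSpace ℝ V] [CompleteSpace V]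
    (n r : ℕ) (φ : Fin n → V) (w : Fin n → ℝ) (hw : ∀ i, 0 ≤ w i)
    (c : V → V) (hc : ∀ v, c v = ∑ i, (w i * ⟪v, φ i⟫) • φ i)
    (ξ : ℕ → V) (lam : ℕ → ℝ)
    (horth : ∀ j k, j < r → k < r → ⟪ξ j, ξ k⟫ = if j = k then 1 else 0)
    (heig : ∀ k, k < r → c (ξ k) = lam k • ξ k)
    (hpos : ∀ k, k < r → 0 < lam k)
    (hdecr : ∀ j k, j ≤ k → k < r → lam k ≤ lam j)
    (hzero : ∀ k, r ≤ k → lam k = 0)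
    (hrange : ∀ v, c v ∈ Submodule.span ℝ (ξ '' Set.Iio r))
    (N : ℕ) (hN : N ≤ r)
    (P : V → V)
    (hP : ∀ v, P v ∈ Submodule.span ℝ (ξ '' Set.Iio N) ∧
               v - P v ∈ (Submodule.span ℝ (ξ '' Set.Iio N))ᗮ) :
    ∑ i, w i * ‖φ i - P (φ i)‖ ^ 2 = ∑ k ∈ Finset.Ico N r, lam k := by
  classical
  -- orthogonality to generators gives orthogonality to the span
  have hspan : ∀ (m : ℕ) (v : V), (∀ j, j < m → ⟪ξ j, v⟫ = 0) →
      ∀ u ∈ Submodule.span ℝ (ξ '' Set.Iio m), ⟪u, v⟫ = 0 := by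
    intro m v hv u hu
    induction hu using Submodule.span_induction with
    | mem x hx => obtain ⟨k, hk, rfl⟩ := hx; exact hv k hk
    | zero => simp
    | add x y _ _ hx hy => rw [inner_add_left, hx, hy, add_zero]
    | smul a x _ hx => rw [real_inner_smul_left, hx, mul_zero]
  -- vectors orthogonal to all ξ_k (k < r) are weighted-orthogonal to the snapshots
  have hker : ∀ v : V, (∀ k, k < r → ⟪ξ k, v⟫ = 0) →
      ∀ j, w j * ⟪v, φ j⟫ ^ 2 = 0 := by
    intro v hv j
    have hcv : ⟪c v, v⟫ = 0 := hspan r v hv _ (hrange v)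
    have hsum : ∑ i, w i * ⟪v, φ i⟫ ^ 2 = 0 := by
      rw [hc v, sum_inner] at hcv
      rw [← hcv]
      refine Finset.sum_congr rfl fun i _ => ?_
      rw [real_inner_smul_left, real_inner_comm (φ i) v]
      ring
    exact (Finset.sum_eq_zero_iff_of_nonneg fun i _ =>
      mul_nonneg (hw i) (sq_nonneg _)).mp hsum j (Finset.mem_univ j)
  set a : Fin n → ℕ → ℝ := fun i k => ⟪φ i, ξ k⟫ with ha
  set q : Fin n → V := fun i => φ i - P (φ i) with hq
  set t : Fin n → V := fun i => q i - ∑ k ∈ Finset.Ico N r, a i k • ξ k with ht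
  -- q is orthogonal to ξ_k for k < N
  have hqk0 : ∀ (i : Fin n) (k : ℕ), k < N → ⟪ξ k, q i⟫ = 0 := by
    intro i k hk
    have hmem : ξ k ∈ Submodule.span ℝ (ξ '' Set.Iio N) :=
      Submodule.subset_span ⟨k, hk, rfl⟩
    exact Submodule.inner_right_of_mem_orthogonal hmem (hP (φ i)).2
  -- for N ≤ k < r, ⟪ξ k, q i⟫ = a i k
  have hqk : ∀ (i : Fin n) (k : ℕ), N ≤ k → k < r → ⟪ξ k, q i⟫ = a i k := by
    intro i k hk1 hk2
    have hPk : ⟪ξ k, P (φ i)⟫ = 0 := by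
      rw [real_inner_comm]
      refine hspan N (ξ k) (fun j hj => ?_) _ (hP (φ i)).1
      rw [horth j k (lt_of_lt_of_le hj hN) hk2, if_neg (by omega)]
    show ⟪ξ k, φ i - P (φ i)⟫ = a i k
    rw [inner_sub_right, hPk, sub_zero, real_inner_comm]
  -- t is orthogonal to all ξ_k, k < r
  have htk : ∀ (i : Fin n) (k : ℕ), k < r → ⟪ξ k, t i⟫ = 0 := by
    intro i k hk
    show ⟪ξ k, q i - ∑ k' ∈ Finset.Ico N r, a i k' • ξ k'⟫ = 0
    rw [inner_sub_right, inner_sum]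
    simp only [real_inner_smul_right]
    rcases lt_or_ge k N with hkN | hkN
    · rw [hqk0 i k hkN, Finset.sum_eq_zero, sub_zero]
      intro k' hk'
      simp only [Finset.mem_Ico] at hk'
      rw [horth k k' hk hk'.2, if_neg (by omega), mul_zero]
    · rw [hqk i k hkN hk]
      have hterm : ∀ k' ∈ Finset.Ico N r, a i k' * ⟪ξ k, ξ k'⟫
          = if k = k' then a i k' else 0 := by
        intro k' hk'
        simp only [Finset.mem_Ico] at hk'
        rw [horth k k' hk hk'.2]
        split <;> simp
      rw [Finset.sum_congr rfl hterm, Finset.sum_ite_eq,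
        if_pos (Finset.mem_Ico.mpr ⟨hkN, hk⟩), sub_self]
  -- weighted norm of t vanishes
  have hwt : ∀ i : Fin n, w i * ‖t i‖ ^ 2 = 0 := by
    intro i
    have hq' : q i = t i + ∑ k ∈ Finset.Ico N r, a i k • ξ k :=
      (sub_eq_iff_eq_add.mp (rfl : q i - _ = t i))
    have hts : ⟪t i, φ i⟫ = ‖t i‖ ^ 2 := by
      have hφ : φ i = q i + P (φ i) :=
        (sub_eq_iff_eq_add.mp (rfl : φ i - P (φ i) = q i))
      have h1 : ⟪t i, P (φ i)⟫ = 0 := by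
        rw [real_inner_comm]
        exact hspan N (t i) (fun j hj => htk i j (lt_of_lt_of_le hj hN)) _ (hP (φ i)).1
      have h2 : ⟪t i, q i⟫ = ‖t i‖ ^ 2 := by
        rw [hq', inner_add_right, real_inner_self_eq_norm_sq, inner_sum]
        rw [Finset.sum_eq_zero, add_zero]
        intro k hk
        simp only [Finset.mem_Ico] at hk
        rw [real_inner_smul_right, real_inner_comm, htk i k hk.2, mul_zero]
      calc ⟪t i, φ i⟫ = ⟪t i, q i + P (φ i)⟫ := by rw [← hφ]
        _ = ‖t i‖ ^ 2 := by rw [inner_add_right, h1, add_zero, h2]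
    have h0 : w i * ⟪t i, φ i⟫ ^ 2 = 0 := hker (t i) (fun k hk => htk i k hk) i
    rw [hts] at h0
    rcases mul_eq_zero.mp h0 with h | h
    · rw [h, zero_mul]
    · rw [pow_eq_zero_iff two_ne_zero |>.mp h, mul_zero]
  -- weighted norm of q equals weighted sum of squared coefficients
  have hnq : ∀ i : Fin n, w i * ‖q i‖ ^ 2
      = w i * ∑ k ∈ Finset.Ico N r, a i k ^ 2 := by
    intro i
    have hq' : q i = t i + ∑ k ∈ Finset.Ico N r, a i k • ξ k :=
      (sub_eq_iff_eq_add.mp (rfl : q i - _ = t i))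
    have h1 : ⟪q i, t i⟫ = ‖t i‖ ^ 2 := by
      rw [hq', inner_add_left, real_inner_self_eq_norm_sq, sum_inner]
      rw [Finset.sum_eq_zero, add_zero]
      intro k hk
      simp only [Finset.mem_Ico] at hk
      rw [real_inner_smul_left, htk i k hk.2, mul_zero]
    have h2 : ⟪q i, ∑ k ∈ Finset.Ico N r, a i k • ξ k⟫
        = ∑ k ∈ Finset.Ico N r, a i k ^ 2 := by
      rw [inner_sum]
      refine Finset.sum_congr rfl fun k hk => ?_
      simp only [Finset.mem_Ico] at hk
      rw [real_inner_smul_right, real_inner_comm, hqk i k hk.1 hk.2, sq]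
    have hnorm : ‖q i‖ ^ 2 = (∑ k ∈ Finset.Ico N r, a i k ^ 2) + ‖t i‖ ^ 2 := by
      rw [← real_inner_self_eq_norm_sq]
      calc ⟪q i, q i⟫ = ⟪q i, t i + ∑ k ∈ Finset.Ico N r, a i k • ξ k⟫ := by
            rw [← hq']
        _ = _ := by rw [inner_add_right, h1, h2, add_comm]
    rw [hnorm, mul_add, hwt i, add_zero]
  -- eigenvalue identity
  have hlam : ∀ k, N ≤ k → k < r → lam k = ∑ i, w i * a i k ^ 2 := by
    intro k _ hk
    have h1 : ⟪c (ξ k), ξ k⟫ = lam k := by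
      rw [heig k hk, real_inner_smul_left, horth k k hk hk, if_pos rfl, mul_one]
    rw [← h1, hc, sum_inner]
    refine Finset.sum_congr rfl fun i _ => ?_
    rw [real_inner_smul_left, real_inner_comm (φ i) (ξ k)]
    show (w i * ⟪φ i, ξ k⟫) * ⟪φ i, ξ k⟫ = w i * ⟪φ i, ξ k⟫ ^ 2
    ring
  -- conclude
  calc ∑ i, w i * ‖φ i - P (φ i)‖ ^ 2
      = ∑ i, w i * ∑ k ∈ Finset.Ico N r, a i k ^ 2 :=
        Finset.sum_congr rfl fun i _ => hnq i
    _ = ∑ k ∈ Finset.Ico N r, ∑ i, w i * a i k ^ 2 := by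
        simp_rw [Finset.mul_sum]; rw [Finset.sum_comm]
    _ = ∑ k ∈ Finset.Ico N r, lam k :=
        Finset.sum_congr rfl fun k hk =>
          (hlam k (Finset.mem_Ico.mp hk).1 (Finset.mem_Ico.mp hk).2).symm
end

section
/- Let V be a real Hilbert space, φ_1, …, φ_n ∈ V, w_1, …, w_n ≥ 0, and let c : V → V be defined by c(v) = Σ_{i=1}^n w_i ⟨v, φ_i⟩ φ_i, with eigenvalues λ_1 ≥ λ_2 ≥ … ≥ λ_r > 0 (counted with multiplicity, and λ_k = 0 for k > r) associated to an orthonormal system of eigenvectors spanning the range of c. Then for every natural number N and every subspace W ⊆ V with dim W ≤ N, the weighted projection error satisfies Σ_{i=1}^n w_i ‖φ_i − P_W(φ_i)‖² ≥ Σ_{k=N+1}^{r} λ_k; consequently the span of the N leading eigenvectors of c minimizes the weighted projection error Σ_{i=1}^n w_i ‖φ_i − P_W(φ_i)‖² over all subspaces W of dimension at most N. -/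
/-!
The weighted energy `v ↦ ∑ i, w i * ⟪v, φ i⟫ ^ 2 = ⟪c v, v⟫` equals `∑ k, λ k * ⟪ξ k, v⟫ ^ 2`,
and the total energy `∑ i, w i * ‖φ i‖ ^ 2` is the trace `∑ k, λ k`. Projecting onto a subspace
with orthonormal basis `b 1, …, b m` therefore leaves the error `∑ k, λ k - ∑ k, λ k * t k` with
`t k = ∑ j, ⟪ξ k, b j⟫ ^ 2`. By Bessel's inequality `0 ≤ t k ≤ 1` and `∑ k, t k ≤ m ≤ N`, and for
decreasing `λ` such weights give `∑ k, λ k * t k ≤ ∑ k < N, λ k` (Ky Fan). Truncating the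
eigen-expansion after `N` terms attains this bound, and the projection onto the span of the
leading eigenvectors does at least as well as that truncation.
-/

open scoped RealInnerProductSpace
open Finset

theorem sum_range_sub_sum_range_min {M : Type*} [AddCommGroup M] (f : ℕ → M) (N r : ℕ) :
    ∑ k ∈ range r, f k - ∑ k ∈ range (min N r), f k = ∑ k ∈ Ico N r, f k := by
  rw [← sum_Ico_eq_sub _ (min_le_right N r)]
  congr 1
  ext k
  simp only [mem_Ico]
  omega

theorem sum_range_mul_le_sum_range {lam t : ℕ → ℝ} {N r : ℕ} (hNr : N ≤ r)
    (hlam : AntitoneOn lam (Set.Iio r)) (hlam0 : ∀ k < r, 0 ≤ lam k)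
    (ht0 : ∀ k < r, 0 ≤ t k) (ht1 : ∀ k < r, t k ≤ 1) (hsum : ∑ k ∈ range r, t k ≤ N) :
    ∑ k ∈ range r, lam k * t k ≤ ∑ k ∈ range N, lam k := by
  obtain ⟨μ, hμ0, hμle, hleμ⟩ : ∃ μ, 0 ≤ μ ∧ (∀ k < N, μ ≤ lam k) ∧ ∀ k ∈ Ico N r, lam k ≤ μ := by
    rcases hNr.lt_or_eq with hlt | rfl
    · exact ⟨lam N, hlam0 N hlt, fun k hk => hlam (Set.mem_Iio.2 (hk.trans hlt)) hlt hk.le,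
        fun k hk => hlam (by simpa using hlt) (mem_Ico.1 hk).2 (mem_Ico.1 hk).1⟩
    · exact ⟨0, le_rfl, fun k hk => hlam0 k hk, by simp⟩
  have hrange : ∀ k ∈ range N, k < r := fun k hk => (mem_range.1 hk).trans_le hNr
  calc ∑ k ∈ range r, lam k * t k
      = ∑ k ∈ range N, lam k * t k + ∑ k ∈ Ico N r, lam k * t k :=
        (sum_range_add_sum_Ico _ hNr).symm
    _ ≤ ∑ k ∈ range N, lam k * t k + ∑ k ∈ Ico N r, μ * t k := by
        gcongr with k hk
        · exact ht0 k (mem_Ico.1 hk).2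
        · exact hleμ k hk
    _ = ∑ k ∈ range N, lam k * t k + μ * (∑ k ∈ range r, t k - ∑ k ∈ range N, t k) := by
        rw [← mul_sum, sum_Ico_eq_sub _ hNr]
    _ ≤ ∑ k ∈ range N, lam k * t k + μ * (N - ∑ k ∈ range N, t k) := by gcongr
    _ = ∑ k ∈ range N, (lam k * t k + μ * (1 - t k)) := by
        simp only [sum_add_distrib, ← mul_sum, sum_sub_distrib, sum_const, card_range,
          nsmul_eq_mul, mul_one]
    _ ≤ ∑ k ∈ range N, (lam k * t k + lam k * (1 - t k)) := by
        gcongr with k hk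
        · exact sub_nonneg.2 (ht1 k (hrange k hk))
        · exact hμle k (mem_range.1 hk)
    _ = ∑ k ∈ range N, lam k := by simp only [← mul_add, add_sub_cancel, mul_one]

section

variable {V : Type*} [NormedAddCommGroup V] [InnerProductSpace ℝ V]

theorem Orthonormal.norm_sub_sum_inner_smul_sq {ι : Type*} {e : ι → V} (he : Orthonormal ℝ e)
    (s : Finset ι) (x : V) :
    ‖x - ∑ i ∈ s, ⟪e i, x⟫ • e i‖ ^ 2 = ‖x‖ ^ 2 - ∑ i ∈ s, ⟪e i, x⟫ ^ 2 := by
  have hcross : ⟪x, ∑ i ∈ s, ⟪e i, x⟫ • e i⟫ = ∑ i ∈ s, ⟪e i, x⟫ ^ 2 := by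
    simp only [inner_sum, real_inner_smul_right, real_inner_comm x, sq]
  have hnorm : ‖∑ i ∈ s, ⟪e i, x⟫ • e i‖ ^ 2 = ∑ i ∈ s, ⟪e i, x⟫ ^ 2 := by
    rw [← real_inner_self_eq_norm_sq, he.inner_sum]
    simp only [conj_trivial, sq]
  rw [norm_sub_sq_real, hcross, hnorm]
  ring

theorem Orthonormal.sum_inner_sq_le {ι : Type*} {e : ι → V} (he : Orthonormal ℝ e)
    (s : Finset ι) (x : V) :
    ∑ i ∈ s, ⟪e i, x⟫ ^ 2 ≤ ‖x‖ ^ 2 := by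
  simpa only [Real.norm_eq_abs, sq_abs] using he.sum_inner_products_le x

theorem norm_sub_sq_le_of_mem_orthogonal {K : Submodule ℝ V} {x p y : V} (hp : p ∈ K)
    (hxp : x - p ∈ Kᗮ) (hy : y ∈ K) : ‖x - p‖ ^ 2 ≤ ‖x - y‖ ^ 2 := by
  have hpy : ⟪x - p, p - y⟫ = 0 :=
    Submodule.inner_left_of_mem_orthogonal (K.sub_mem hp hy) hxp
  have hpyth : ‖x - y‖ ^ 2 = ‖x - p‖ ^ 2 + ‖p - y‖ ^ 2 := by
    rw [← sub_add_sub_cancel x p y, norm_add_sq_real, hpy, mul_zero, add_zero]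
  rw [hpyth]
  exact le_add_of_nonneg_right (sq_nonneg _)

theorem eq_sum_inner_smul_of_mem_orthogonal {K : Submodule ℝ V} [K.HasOrthogonalProjection]
    {ι : Type*} [Fintype ι] (b : OrthonormalBasis ι ℝ K) {x p : V} (hp : p ∈ K)
    (hxp : x - p ∈ Kᗮ) : p = ∑ i, ⟪(b i : V), x⟫ • (b i : V) := by
  rw [← K.eq_starProjection_of_mem_orthogonal hp hxp, K.starProjection_apply,
    b.orthogonalProjectionOnto_apply_eq_sum]
  simp

variable {ι : Type*} [Fintype ι] (w : ι → ℝ) (φ : ι → V)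

def weightedEnergy (v : V) : ℝ := ∑ i, w i * ⟪v, φ i⟫ ^ 2

theorem sum_mul_norm_sub_sum_inner_smul_sq {κ : Type*} {e : κ → V} (he : Orthonormal ℝ e)
    (s : Finset κ) :
    ∑ i, w i * ‖φ i - ∑ k ∈ s, ⟪e k, φ i⟫ • e k‖ ^ 2 =
      ∑ i, w i * ‖φ i‖ ^ 2 - ∑ k ∈ s, weightedEnergy w φ (e k) := by
  simp only [he.norm_sub_sum_inner_smul_sq, weightedEnergy, mul_sub, mul_sum, sum_sub_distrib]
  rw [sum_comm]

variable {c : V → V}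

theorem inner_apply_eq_sum (hc : ∀ v, c v = ∑ i, (w i * ⟪v, φ i⟫) • φ i) (u v : V) :
    ⟪c u, v⟫ = ∑ i, w i * (⟪u, φ i⟫ * ⟪v, φ i⟫) := by
  rw [hc, sum_inner]
  refine sum_congr rfl fun i _ => ?_
  rw [real_inner_smul_left, real_inner_comm v (φ i), mul_assoc]

theorem inner_apply_self_eq_weightedEnergy (hc : ∀ v, c v = ∑ i, (w i * ⟪v, φ i⟫) • φ i)
    (v : V) :
    ⟪c v, v⟫ = weightedEnergy w φ v := by
  simp only [inner_apply_eq_sum w φ hc, weightedEnergy, sq]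

structure IsEigenbasisOfRange (c : V → V) {κ : Type*} (e : κ → V) (μ : κ → ℝ) : Prop where
  orthonormal : Orthonormal ℝ e
  apply_eq : ∀ k, c (e k) = μ k • e k
  mem_span : ∀ v, c v ∈ Submodule.span ℝ (Set.range e)

variable {w φ} {κ : Type*} {e : κ → V} {μ : κ → ℝ}

theorem IsEigenbasisOfRange.weightedEnergy_apply (hc : ∀ v, c v = ∑ i, (w i * ⟪v, φ i⟫) • φ i)
    (he : IsEigenbasisOfRange c e μ) (k : κ) : weightedEnergy w φ (e k) = μ k := by
  rw [← inner_apply_self_eq_weightedEnergy w φ hc, he.apply_eq, real_inner_smul_left,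
    real_inner_self_eq_norm_sq, he.orthonormal.norm_eq_one, one_pow, mul_one]

variable [Fintype κ]

theorem IsEigenbasisOfRange.apply_eq_sum (hc : ∀ v, c v = ∑ i, (w i * ⟪v, φ i⟫) • φ i)
    (he : IsEigenbasisOfRange c e μ) (v : V) : c v = ∑ k, (μ k * ⟪e k, v⟫) • e k := by
  obtain ⟨a, ha⟩ := Submodule.mem_span_range_iff_exists_fun ℝ |>.1 (he.mem_span v)
  have hcoeff : ∀ k, a k = μ k * ⟪e k, v⟫ := fun k => by
    calc a k = ⟪e k, c v⟫ := by rw [← ha, he.orthonormal.inner_right_fintype]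
      _ = ⟪c (e k), v⟫ := by
        rw [real_inner_comm, inner_apply_eq_sum w φ hc, inner_apply_eq_sum w φ hc]
        simp only [mul_comm (⟪v, _⟫)]
      _ = μ k * ⟪e k, v⟫ := by rw [he.apply_eq, real_inner_smul_left]
  rw [← ha]
  simp only [hcoeff]

theorem IsEigenbasisOfRange.weightedEnergy_eq (hc : ∀ v, c v = ∑ i, (w i * ⟪v, φ i⟫) • φ i)
    (he : IsEigenbasisOfRange c e μ) (v : V) :
    weightedEnergy w φ v = ∑ k, μ k * ⟪e k, v⟫ ^ 2 := by
  rw [← inner_apply_self_eq_weightedEnergy w φ hc, he.apply_eq_sum hc, sum_inner]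
  simp only [real_inner_smul_left, sq, mul_assoc]

theorem IsEigenbasisOfRange.mul_inner_eq_zero (hw : ∀ i, 0 ≤ w i)
    (hc : ∀ v, c v = ∑ i, (w i * ⟪v, φ i⟫) • φ i) (he : IsEigenbasisOfRange c e μ) {v : V}
    (hv : ∀ k, ⟪e k, v⟫ = 0) (i : ι) : w i * ⟪v, φ i⟫ = 0 := by
  have hzero : weightedEnergy w φ v = 0 := by simp [he.weightedEnergy_eq hc, hv]
  have hterm := (sum_eq_zero_iff_of_nonneg fun j _ => mul_nonneg (hw j) (sq_nonneg _)).1 hzero i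
    (mem_univ i)
  rcases mul_eq_zero.1 hterm with h | h
  · rw [h, zero_mul]
  · rw [pow_eq_zero_iff two_ne_zero |>.1 h, mul_zero]

theorem IsEigenbasisOfRange.sum_mul_norm_sq (hw : ∀ i, 0 ≤ w i)
    (hc : ∀ v, c v = ∑ i, (w i * ⟪v, φ i⟫) • φ i) (he : IsEigenbasisOfRange c e μ) :
    ∑ i, w i * ‖φ i‖ ^ 2 = ∑ k, μ k := by
  -- `c` vanishes on `(span e)ᗮ`, so a snapshot of positive weight has no component there
  have hres : ∀ i, w i * ‖φ i - ∑ k, ⟪e k, φ i⟫ • e k‖ ^ 2 = 0 := fun i => by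
    set ρ := φ i - ∑ k, ⟪e k, φ i⟫ • e k
    have hρ : ∀ k, ⟪e k, ρ⟫ = 0 := fun k => by
      rw [inner_sub_right, he.orthonormal.inner_right_fintype, sub_self]
    have hφρ : ⟪ρ, φ i⟫ = ‖ρ‖ ^ 2 := by
      conv_lhs => rw [← sub_add_cancel (φ i) (∑ k, ⟪e k, φ i⟫ • e k)]
      rw [inner_add_right, inner_sum, real_inner_self_eq_norm_sq, add_eq_left]
      exact sum_eq_zero fun k _ => by
        rw [real_inner_smul_right, real_inner_comm (e k) ρ, hρ, mul_zero]
    rw [← hφρ]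
    exact he.mul_inner_eq_zero hw hc hρ i
  have := sum_mul_norm_sub_sum_inner_smul_sq w φ he.orthonormal univ
  simp only [hres, sum_const_zero, he.weightedEnergy_apply hc] at this
  linarith

variable {r : ℕ} {ξ : ℕ → V} {lam : ℕ → ℝ}

theorem weightedEnergy_nonneg (hw : ∀ i, 0 ≤ w i) (v : V) : 0 ≤ weightedEnergy w φ v :=
  sum_nonneg fun i _ => mul_nonneg (hw i) (sq_nonneg _)

theorem IsEigenbasisOfRange.sum_mul_norm_sq_eq_sum_range (hw : ∀ i, 0 ≤ w i)
    (hc : ∀ v, c v = ∑ i, (w i * ⟪v, φ i⟫) • φ i)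
    (hξ : IsEigenbasisOfRange c (fun k : Fin r => ξ k) (fun k => lam k)) :
    ∑ i, w i * ‖φ i‖ ^ 2 = ∑ k ∈ range r, lam k := by
  rw [hξ.sum_mul_norm_sq hw hc, Fin.sum_univ_eq_sum_range]

theorem IsEigenbasisOfRange.sum_weightedEnergy_le (hw : ∀ i, 0 ≤ w i)
    (hc : ∀ v, c v = ∑ i, (w i * ⟪v, φ i⟫) • φ i)
    (hξ : IsEigenbasisOfRange c (fun k : Fin r => ξ k) (fun k => lam k))
    (hlam : AntitoneOn lam (Set.Iio r)) {β : Type*} [Fintype β] {b : β → V}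
    (hb : Orthonormal ℝ b) {N : ℕ} (hcard : Fintype.card β ≤ N) :
    ∑ j, weightedEnergy w φ (b j) ≤ ∑ k ∈ range (min N r), lam k := by
  set t : ℕ → ℝ := fun k => ∑ j, ⟪ξ k, b j⟫ ^ 2
  have hnorm : ∀ k < r, ‖ξ k‖ = 1 := fun k hk => hξ.orthonormal.norm_eq_one ⟨k, hk⟩
  have ht1 : ∀ k < r, t k ≤ 1 := fun k hk => by
    simpa only [real_inner_comm (ξ k), hnorm k hk, one_pow] using hb.sum_inner_sq_le univ (ξ k)
  have htN : ∑ k ∈ range r, t k ≤ N :=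
    calc ∑ k ∈ range r, t k = ∑ j, ∑ k : Fin r, ⟪ξ k, b j⟫ ^ 2 := by
          rw [sum_comm]
          exact sum_congr rfl fun j _ =>
            (Fin.sum_univ_eq_sum_range (fun k => ⟪ξ k, b j⟫ ^ 2) r).symm
      _ ≤ ∑ j, ‖b j‖ ^ 2 := sum_le_sum fun j _ => hξ.orthonormal.sum_inner_sq_le univ (b j)
      _ = Fintype.card β := by simp [hb.norm_eq_one]
      _ ≤ N := by exact_mod_cast hcard
  have htr : ∑ k ∈ range r, t k ≤ r :=
    calc ∑ k ∈ range r, t k ≤ ∑ k ∈ range r, 1 := sum_le_sum fun k hk => ht1 k (mem_range.1 hk)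
      _ = r := by simp
  calc ∑ j, weightedEnergy w φ (b j) = ∑ k ∈ range r, lam k * t k := by
        simp only [hξ.weightedEnergy_eq hc, t, mul_sum]
        rw [sum_comm (s := range r)]
        exact sum_congr rfl fun j _ =>
          Fin.sum_univ_eq_sum_range (fun k => lam k * ⟪ξ k, b j⟫ ^ 2) r
    _ ≤ ∑ k ∈ range (min N r), lam k :=
        sum_range_mul_le_sum_range (min_le_right N r) hlam
          (fun k hk => hξ.weightedEnergy_apply hc ⟨k, hk⟩ ▸ weightedEnergy_nonneg hw _)
          (fun k _ => sum_nonneg fun j _ => sq_nonneg _) ht1 (by exact_mod_cast le_min htN htr)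

theorem IsEigenbasisOfRange.sum_Ico_le_sum_mul_norm_sub_sq (hw : ∀ i, 0 ≤ w i)
    (hc : ∀ v, c v = ∑ i, (w i * ⟪v, φ i⟫) • φ i)
    (hξ : IsEigenbasisOfRange c (fun k : Fin r => ξ k) (fun k => lam k))
    (hlam : AntitoneOn lam (Set.Iio r)) {N : ℕ} (W : Submodule ℝ V) [FiniteDimensional ℝ W]
    (hdim : Module.finrank ℝ W ≤ N) {P : V → V} (hP : ∀ v, P v ∈ W ∧ v - P v ∈ Wᗮ) :
    ∑ k ∈ Ico N r, lam k ≤ ∑ i, w i * ‖φ i - P (φ i)‖ ^ 2 := by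
  set b := stdOrthonormalBasis ℝ W
  have hb : Orthonormal ℝ (fun j => (b j : V)) := b.orthonormal.comp_linearIsometry W.subtypeₗᵢ
  have hPb : ∀ v, P v = ∑ j, ⟪(b j : V), v⟫ • (b j : V) := fun v =>
    eq_sum_inner_smul_of_mem_orthogonal b (hP v).1 (hP v).2
  calc ∑ k ∈ Ico N r, lam k = ∑ k ∈ range r, lam k - ∑ k ∈ range (min N r), lam k :=
        (sum_range_sub_sum_range_min lam N r).symm
    _ ≤ ∑ k ∈ range r, lam k - ∑ j, weightedEnergy w φ (b j) := by
        gcongr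
        exact hξ.sum_weightedEnergy_le hw hc hlam hb (by simpa using hdim)
    _ = ∑ i, w i * ‖φ i - P (φ i)‖ ^ 2 := by
        rw [← hξ.sum_mul_norm_sq_eq_sum_range hw hc, ← sum_mul_norm_sub_sum_inner_smul_sq w φ hb]
        simp only [hPb]

theorem IsEigenbasisOfRange.sum_mul_norm_sub_sq_le_sum_Ico (hw : ∀ i, 0 ≤ w i)
    (hc : ∀ v, c v = ∑ i, (w i * ⟪v, φ i⟫) • φ i)
    (hξ : IsEigenbasisOfRange c (fun k : Fin r => ξ k) (fun k => lam k)) {N : ℕ} {Q : V → V}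
    (hQ : ∀ v, Q v ∈ Submodule.span ℝ (ξ '' Set.Iio N) ∧
      v - Q v ∈ (Submodule.span ℝ (ξ '' Set.Iio N))ᗮ) :
    ∑ i, w i * ‖φ i - Q (φ i)‖ ^ 2 ≤ ∑ k ∈ Ico N r, lam k := by
  set e : Fin (min N r) → V := fun k => ξ k
  have he : Orthonormal ℝ e :=
    hξ.orthonormal.comp (Fin.castLE (min_le_right N r)) (Fin.castLE_injective _)
  have hmem : ∀ x, ∑ k, ⟪e k, x⟫ • e k ∈ Submodule.span ℝ (ξ '' Set.Iio N) := fun x =>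
    Submodule.sum_mem _ fun k _ => Submodule.smul_mem _ _ <|
      Submodule.subset_span ⟨k, k.2.trans_le (min_le_left N r), rfl⟩
  calc ∑ i, w i * ‖φ i - Q (φ i)‖ ^ 2 ≤ ∑ i, w i * ‖φ i - ∑ k, ⟪e k, φ i⟫ • e k‖ ^ 2 :=
        sum_le_sum fun i _ => mul_le_mul_of_nonneg_left
          (norm_sub_sq_le_of_mem_orthogonal (hQ _).1 (hQ _).2 (hmem _)) (hw i)
    _ = ∑ k ∈ range r, lam k - ∑ k ∈ range (min N r), lam k := by
        rw [sum_mul_norm_sub_sum_inner_smul_sq w φ he, hξ.sum_mul_norm_sq_eq_sum_range hw hc,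
          ← Fin.sum_univ_eq_sum_range (fun k => lam k) (min N r)]
        congr 1
        exact sum_congr rfl fun k _ =>
          hξ.weightedEnergy_apply hc (Fin.castLE (min_le_right N r) k)
    _ = ∑ k ∈ Ico N r, lam k := sum_range_sub_sum_range_min lam N r

end

theorem weighted_POD_optimality_general
    {V : Type*} [NormedAddCommGroup V] [InnerProductSpace ℝ V]
    (n r : ℕ) (φ : Fin n → V) (w : Fin n → ℝ) (hw : ∀ i, 0 ≤ w i)
    (c : V → V) (hc : ∀ v, c v = ∑ i, (w i * ⟪v, φ i⟫) • φ i)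
    (ξ : ℕ → V) (lam : ℕ → ℝ)
    (horth : ∀ j k, j < r → k < r → ⟪ξ j, ξ k⟫ = if j = k then 1 else 0)
    (heig : ∀ k, k < r → c (ξ k) = lam k • ξ k)
    (hdecr : ∀ j k, j ≤ k → k < r → lam k ≤ lam j)
    (hrange : ∀ v, c v ∈ Submodule.span ℝ (ξ '' Set.Iio r))
    (N : ℕ)
    (W : Submodule ℝ V) [FiniteDimensional ℝ W] (hdim : Module.finrank ℝ W ≤ N)
    (P : V → V) (hP : ∀ v, P v ∈ W ∧ v - P v ∈ Wᗮ)
    (Q : V → V)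
    (hQ : ∀ v, Q v ∈ Submodule.span ℝ (ξ '' Set.Iio N) ∧
               v - Q v ∈ (Submodule.span ℝ (ξ '' Set.Iio N))ᗮ) :
    (∑ k ∈ Finset.Ico N r, lam k ≤ ∑ i, w i * ‖φ i - P (φ i)‖ ^ 2) ∧
    (∑ i, w i * ‖φ i - Q (φ i)‖ ^ 2 ≤ ∑ i, w i * ‖φ i - P (φ i)‖ ^ 2) := by
  have hspan : Set.range (fun k : Fin r => ξ k) = ξ '' Set.Iio r := by
    rw [← Fin.range_val, ← Set.range_comp]
    rfl
  have hξ : IsEigenbasisOfRange c (fun k : Fin r => ξ k) (fun k => lam k) :=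
    ⟨orthonormal_iff_ite.2 fun j k => by simpa only [Fin.val_inj] using horth j k j.2 k.2,
      fun k => heig k k.2, fun v => hspan ▸ hrange v⟩
  have hP_err := hξ.sum_Ico_le_sum_mul_norm_sub_sq hw hc
    (fun j _ k hk hjk => hdecr j k hjk hk) W hdim hP
  exact ⟨hP_err, (hξ.sum_mul_norm_sub_sq_le_sum_Ico hw hc hQ).trans hP_err⟩

/-- Optimality of the weighted POD space: for every subspace `W` with `dim W ≤ N`,
the weighted projection error is at least `Σ_{k=N}^{r-1} λ_k`, where
`λ_0 ≥ … ≥ λ_{r-1} > 0` are the positive eigenvalues of the weighted correlation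
operator `c` (with `λ_k = 0` for `k ≥ r`); consequently the span of the `N` leading
eigenvectors of `c` minimizes the weighted projection error over all subspaces of
dimension at most `N`. -/
theorem weighted_POD_optimality
    {V : Type*} [NormedAddCommGroup V] [InnerProductSpace ℝ V] [CompleteSpace V]
    (n r : ℕ) (φ : Fin n → V) (w : Fin n → ℝ) (hw : ∀ i, 0 ≤ w i)
    (c : V → V) (hc : ∀ v, c v = ∑ i, (w i * ⟪v, φ i⟫) • φ i)
    (ξ : ℕ → V) (lam : ℕ → ℝ)
    (horth : ∀ j k, j < r → k < r → ⟪ξ j, ξ k⟫ = if j = k then 1 else 0)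
    (heig : ∀ k, k < r → c (ξ k) = lam k • ξ k)
    (hpos : ∀ k, k < r → 0 < lam k)
    (hdecr : ∀ j k, j ≤ k → k < r → lam k ≤ lam j)
    (hzero : ∀ k, r ≤ k → lam k = 0)
    (hrange : ∀ v, c v ∈ Submodule.span ℝ (ξ '' Set.Iio r))
    (N : ℕ)
    (W : Submodule ℝ V) [FiniteDimensional ℝ W] (hdim : Module.finrank ℝ W ≤ N)
    (P : V → V) (hP : ∀ v, P v ∈ W ∧ v - P v ∈ Wᗮ)
    (Q : V → V)
    (hQ : ∀ v, Q v ∈ Submodule.span ℝ (ξ '' Set.Iio N) ∧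
               v - Q v ∈ (Submodule.span ℝ (ξ '' Set.Iio N))ᗮ) :
    (∑ k ∈ Finset.Ico N r, lam k ≤ ∑ i, w i * ‖φ i - P (φ i)‖ ^ 2) ∧
    (∑ i, w i * ‖φ i - Q (φ i)‖ ^ 2 ≤ ∑ i, w i * ‖φ i - P (φ i)‖ ^ 2) :=
  weighted_POD_optimality_general n r φ w hw c hc ξ lam horth heig hdecr hrange N W hdim P hP Q hQ
end
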